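/- arXiv:2304.03734 — 3 statements merged into one kernel-verified Lean document; each statement's English description precedes it below -/
import Mathlib

section
/- For all x in the open interval (-1,1), H(1/2 + x/2) ≤ log 2 − x²/2, where H(p) = −p·log p − (1−p)·log(1−p) is the binary entropy function. -/
noncomputable def binEntropy (p : ℝ) : ℝ :=
  -p * Real.log p - (1 - p) * Real.log (1 - p)

/-!
The gap `log 2 - 2 t ^ 2 - H (1/2 + t)` vanishes at `t = 0` and is even in `t`. For `t ≥ 0` its
derivative is `log (1/2 + t) - log (1/2 - t) - 4 t`, which is nonnegative because
`log (1 + x) - log (1 - x) = 2 (x + x ^ 3 / 3 + x ^ 5 / 5 + ⋯)`. Taking `t = x / 2` gives the claim.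
-/

namespace Real

theorem two_mul_le_log_one_add_sub_log_one_sub {x : ℝ} (hx₀ : 0 ≤ x) (hx₁ : x < 1) :
    2 * x ≤ log (1 + x) - log (1 - x) := by
  have hsum := hasSum_log_sub_log_of_abs_lt_one (abs_lt.2 ⟨by linarith, hx₁⟩)
  simpa using le_hasSum hsum 0 fun k _ ↦ by positivity

theorem four_mul_le_log_two_inv_add_sub_log_two_inv_sub {t : ℝ} (ht₀ : 0 ≤ t) (ht₁ : t < 2⁻¹) :
    4 * t ≤ log (2⁻¹ + t) - log (2⁻¹ - t) := by
  have hlog : log (2⁻¹ + t) - log (2⁻¹ - t) = log (1 + 2 * t) - log (1 - 2 * t) := by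
    rw [show 2⁻¹ + t = (1 + 2 * t) / 2 by ring, show 2⁻¹ - t = (1 - 2 * t) / 2 by ring,
      log_div (by linarith) two_ne_zero, log_div (by linarith) two_ne_zero]
    ring
  rw [hlog]
  linarith [two_mul_le_log_one_add_sub_log_one_sub (x := 2 * t) (by linarith) (by linarith)]

theorem binEntropy_two_inv_add_le_of_nonneg {t : ℝ} (ht₀ : 0 ≤ t) (ht₁ : t ≤ 2⁻¹) :
    binEntropy (2⁻¹ + t) ≤ log 2 - 2 * t ^ 2 := by
  set gap : ℝ → ℝ := fun s ↦ log 2 - 2 * s ^ 2 - binEntropy (2⁻¹ + s)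
  have hderiv : ∀ s ∈ Set.Ioo 0 t,
      HasDerivAt gap (log (2⁻¹ + s) - log (2⁻¹ - s) - 4 * s) s := by
    intro s ⟨hs₀, hst⟩
    have hsq : HasDerivAt (fun s ↦ log 2 - 2 * s ^ 2) (-(4 * s)) s :=
      (((hasDerivAt_pow 2 s).const_mul 2).const_sub (log 2)).congr_deriv (by ring)
    have hH : HasDerivAt (fun s ↦ binEntropy (2⁻¹ + s)) (log (2⁻¹ - s) - log (2⁻¹ + s)) s :=
      ((hasDerivAt_binEntropy (p := 2⁻¹ + s) (by linarith) (by linarith)).comp_const_add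
        2⁻¹ s).congr_deriv (by norm_num [sub_add_eq_sub_sub])
    exact (hsq.sub hH).congr_deriv (by ring)
  have hmono : MonotoneOn gap (Set.Icc 0 t) := by
    refine monotoneOn_of_hasDerivWithinAt_nonneg (convex_Icc 0 t) (by fun_prop)
      (f' := fun s ↦ log (2⁻¹ + s) - log (2⁻¹ - s) - 4 * s) ?_ ?_ <;>
      rw [interior_Icc] <;> intro s hs
    · exact (hderiv s hs).hasDerivWithinAt
    · linarith [four_mul_le_log_two_inv_add_sub_log_two_inv_sub hs.1.le (hs.2.trans_le ht₁)]
  have hgap := hmono (Set.left_mem_Icc.2 ht₀) (Set.right_mem_Icc.2 ht₀) ht₀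
  simp only [gap, add_zero, binEntropy_two_inv] at hgap
  linarith

theorem binEntropy_two_inv_add_le {t : ℝ} (ht : |t| ≤ 2⁻¹) :
    binEntropy (2⁻¹ + t) ≤ log 2 - 2 * t ^ 2 := by
  rcases le_total 0 t with ht₀ | ht₀
  · exact binEntropy_two_inv_add_le_of_nonneg ht₀ (le_of_abs_le ht)
  · rw [binEntropy_two_inv_add, ← neg_sq, sub_eq_add_neg]
    exact binEntropy_two_inv_add_le_of_nonneg (neg_nonneg.2 ht₀) ((neg_le_abs t).trans ht)

end Real

theorem binEntropy_eq_real_binEntropy : binEntropy = Real.binEntropy := by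
  funext p
  simp only [binEntropy, Real.binEntropy, Real.log_inv]
  ring

theorem entropy_quadratic_bound :
    ∀ x ∈ Set.Ioo (-1 : ℝ) 1,
      binEntropy (1/2 + x/2) ≤ Real.log 2 - x^2 / 2 := by
  intro x ⟨hx₁, hx₂⟩
  have hbound := Real.binEntropy_two_inv_add_le (t := x / 2) (abs_le.2 ⟨by linarith, by linarith⟩)
  rw [binEntropy_eq_real_binEntropy, one_div]
  linarith
end

section
/- Let y be a positive integer and s ∈ (0, 1/2) with s·y an integer. Then the sum over k from 0 to s·y of the binomial coefficients C(y, k) is strictly less than C(y, s·y) · (1−s)/(1−2s). -/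
/-!
Below `s·y` the ratio `C(y, k) / C(y, k + 1) = (k + 1) / (y - k)` is at most `r = s / (1 - s) < 1`,
so the lower tail is dominated by `C(y, s·y)` times a geometric series of ratio `r`, whose sum is
strictly less than `1 / (1 - r) = (1 - s) / (1 - 2s)`.
-/

open Finset

lemma geom_sum_lt_inv_one_sub {K : Type*} [Field K] [LinearOrder K] [IsStrictOrderedRing K]
    {x : K} (h0 : 0 < x) (h1 : x < 1) (n : ℕ) :
    ∑ i ∈ range n, x ^ i < (1 - x)⁻¹ := by
  rw [← one_div, lt_div_iff₀ (sub_pos.mpr h1), geom_sum_mul_neg]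
  linarith [pow_pos h0 n]

lemma sum_range_succ_le_mul_geom_sum {K : Type*} [CommRing K] [LinearOrder K]
    [IsStrictOrderedRing K] {f : ℕ → K} {r : K} (hr : 0 ≤ r) {m : ℕ}
    (hf : ∀ k < m, f k ≤ r * f (k + 1)) :
    ∑ k ∈ range (m + 1), f k ≤ f m * ∑ j ∈ range (m + 1), r ^ j := by
  induction m with
  | zero => simp
  | succ m ih =>
    calc ∑ k ∈ range (m + 2), f k
        = ∑ k ∈ range (m + 1), f k + f (m + 1) := sum_range_succ f (m + 1)
      _ ≤ f m * ∑ j ∈ range (m + 1), r ^ j + f (m + 1) :=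
          add_le_add_left (ih fun k hk => hf k (hk.trans m.lt_succ_self)) _
      _ ≤ r * f (m + 1) * ∑ j ∈ range (m + 1), r ^ j + f (m + 1) := by
          gcongr
          exact hf m m.lt_succ_self
      _ = f (m + 1) * ∑ j ∈ range (m + 2), r ^ j := by
          rw [geom_sum_succ (n := m + 1)]; ring

lemma Nat.choose_le_div_one_sub_mul_choose_succ {n k : ℕ} {s : ℝ} (hs : s < 1)
    (hk : (k + 1 : ℝ) ≤ s * (n + 1)) :
    (n.choose k : ℝ) ≤ s / (1 - s) * n.choose (k + 1) := by
  have hkn : k < n := by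
    have : (k + 1 : ℝ) < n + 1 := hk.trans_lt (by nlinarith [n.cast_nonneg (α := ℝ)])
    exact_mod_cast (add_lt_add_iff_right 1).mp this
  have hratio : (n.choose (k + 1) : ℝ) * (k + 1) = n.choose k * (n - k) := by
    have h := congrArg (Nat.cast (R := ℝ)) (n.choose_succ_right_eq k)
    push_cast [Nat.cast_sub hkn.le] at h
    exact h
  rw [div_mul_eq_mul_div, le_div_iff₀ (sub_pos.mpr hs)]
  refine le_of_mul_le_mul_right ?_ (k.cast_add_one_pos (α := ℝ))
  calc (n.choose k : ℝ) * (1 - s) * (k + 1) = n.choose k * ((1 - s) * (k + 1)) := by ring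
    _ ≤ n.choose k * (s * (n - k)) := mul_le_mul_of_nonneg_left (by linarith) (Nat.cast_nonneg _)
    _ = s * n.choose (k + 1) * (k + 1) := by linear_combination -s * hratio

theorem binomial_tail_bound_general (y m : ℕ) (s : ℝ)
    (hs0 : 0 < s) (hs1 : s < 1/2) (hm : (m : ℝ) = s * y) :
    (∑ k ∈ Finset.range (m + 1), (y.choose k : ℝ)) <
      (y.choose m : ℝ) * (1 - s) / (1 - 2*s) := by
  have h1s : 0 < 1 - s := by linarith
  set r := s / (1 - s) with hr
  have hr0 : 0 < r := div_pos hs0 h1s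
  have hr1 : r < 1 := (div_lt_one h1s).mpr (by linarith)
  have hmy : m ≤ y := by
    have : (m : ℝ) ≤ y := by rw [hm]; nlinarith [y.cast_nonneg (α := ℝ)]
    exact_mod_cast this
  have hstep : ∀ k < m, (y.choose k : ℝ) ≤ r * y.choose (k + 1) := fun k hk =>
    Nat.choose_le_div_one_sub_mul_choose_succ (by linarith) <| by
      have : (k + 1 : ℝ) ≤ m := by exact_mod_cast hk
      linarith
  have hgeom : (1 - r)⁻¹ = (1 - s) / (1 - 2 * s) := by
    rw [hr]; field_simp; ring
  calc ∑ k ∈ range (m + 1), (y.choose k : ℝ)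
      ≤ y.choose m * ∑ j ∈ range (m + 1), r ^ j := sum_range_succ_le_mul_geom_sum hr0.le hstep
    _ < y.choose m * (1 - r)⁻¹ := by
        gcongr
        · exact_mod_cast Nat.choose_pos hmy
        · exact geom_sum_lt_inv_one_sub hr0 hr1 _
    _ = (y.choose m : ℝ) * (1 - s) / (1 - 2 * s) := by rw [hgeom, mul_div_assoc]

theorem binomial_tail_bound (y m : ℕ) (s : ℝ) (hy : 1 ≤ y)
    (hs0 : 0 < s) (hs1 : s < 1/2) (hm : (m : ℝ) = s * y) :
    (∑ k ∈ Finset.range (m + 1), (y.choose k : ℝ)) <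
      (y.choose m : ℝ) * (1 - s) / (1 - 2*s) :=
  binomial_tail_bound_general y m s hs0 hs1 hm
end

section
/- For real λ ≥ 0, g > 0, and real x, setting p = 1/2 + 3x/(2(3+2λ)√g): if |x| < (3+2λ)√g/3 then g·H(1/2 + x/(2√g)) + (3+2λ)g·H(p) ≤ ((2+λ)g)·log 4 − x²·(6+λ)/(3+2λ), where H is the binary entropy (assuming also |x| < √g so the first argument is in (0,1)). -/
/-! Writing `p = (1 + u) / 2` gives `H(p) = log 2 - ((1 + u) log (1 + u) + (1 - u) log (1 - u)) / 2`,
and the bracket is at least `u²` on `(-1, 1)`: the difference vanishes at `0` and has derivative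
`log (1 + u) - log (1 - u) - 2u`, which has the sign of `u`. Hence `H(1/2 + u/2) ≤ log 2 - u²/2`.
Applied with `u = x/√g` and `u = 3x/((3 + 2λ)√g)` and weighted by `g` and `(3 + 2λ)g`, the two
quadratic corrections add up to `x² (6 + λ)/(3 + 2λ)`. -/

open Real (log)

lemma hasDerivAt_mul_log_one_add_add_mul_log_one_sub_sub_sq {t : ℝ} (ht : |t| < 1) :
    HasDerivAt (fun u => (1 + u) * log (1 + u) + (1 - u) * log (1 - u) - u ^ 2)
      (log (1 + t) - log (1 - t) - 2 * t) t := by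
  obtain ⟨ht₁, ht₂⟩ := abs_lt.mp ht
  have hplus := (Real.hasDerivAt_mul_log (x := 1 + t) (by linarith)).comp t
    ((hasDerivAt_id t).const_add 1)
  have hminus := (Real.hasDerivAt_mul_log (x := 1 - t) (by linarith)).comp t
    ((hasDerivAt_id t).const_sub 1)
  refine ((hplus.add hminus).sub (hasDerivAt_pow 2 t)).congr_deriv ?_
  ring

lemma two_mul_le_log_one_add_sub_log_one_sub {t : ℝ} (ht₀ : 0 ≤ t) (ht₁ : t < 1) :
    2 * t ≤ log (1 + t) - log (1 - t) := by
  have h := Real.sum_range_le_log_div ht₀ ht₁ 1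
  rw [Real.log_div (by linarith) (by linarith)] at h
  simp only [Finset.range_one, Finset.sum_singleton] at h
  norm_num at h
  linarith

lemma sq_le_mul_log_one_add_add_mul_log_one_sub {u : ℝ} (hu : |u| < 1) :
    u ^ 2 ≤ (1 + u) * log (1 + u) + (1 - u) * log (1 - u) := by
  wlog hu₀ : 0 ≤ u generalizing u
  · have h := this (u := -u) (by rwa [abs_neg]) (by linarith)
    rw [neg_sq, sub_neg_eq_add, ← sub_eq_add_neg] at h
    linarith
  set φ := fun u : ℝ => (1 + u) * log (1 + u) + (1 - u) * log (1 - u) - u ^ 2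
  have hu₁ : u < 1 := (le_abs_self u).trans_lt hu
  have hderiv : ∀ t ∈ Set.Icc 0 u, HasDerivAt φ (log (1 + t) - log (1 - t) - 2 * t) t :=
    fun t ht => hasDerivAt_mul_log_one_add_add_mul_log_one_sub_sub_sq
      (abs_lt.mpr ⟨by linarith [ht.1], by linarith [ht.2]⟩)
  have hmono : MonotoneOn φ (Set.Icc 0 u) := by
    refine monotoneOn_of_hasDerivWithinAt_nonneg (convex_Icc 0 u)
      (fun t ht => (hderiv t ht).continuousAt.continuousWithinAt)
      (fun t ht => (hderiv t (interior_subset ht)).hasDerivWithinAt) fun t ht => ?_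
    rw [interior_Icc] at ht
    linarith [two_mul_le_log_one_add_sub_log_one_sub ht.1.le (ht.2.trans hu₁)]
  have h := hmono ⟨le_rfl, hu₀⟩ ⟨hu₀, le_rfl⟩ hu₀
  simp only [φ] at h
  norm_num at h
  linarith

lemma binEntropy_half_add_half (u : ℝ) (hu : |u| < 1) :
    binEntropy (1 / 2 + u / 2) =
      log 2 - ((1 + u) * log (1 + u) + (1 - u) * log (1 - u)) / 2 := by
  obtain ⟨hu₁, hu₂⟩ := abs_lt.mp hu
  have hp : 1 / 2 + u / 2 = (1 + u) / 2 := by ring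
  have hq : 1 - (1 / 2 + u / 2) = (1 - u) / 2 := by ring
  rw [binEntropy, hq, hp, Real.log_div (by linarith) two_ne_zero,
    Real.log_div (by linarith) two_ne_zero]
  ring

lemma binEntropy_half_add_half_le (u : ℝ) (hu : |u| < 1) :
    binEntropy (1 / 2 + u / 2) ≤ log 2 - u ^ 2 / 2 := by
  rw [binEntropy_half_add_half u hu]
  linarith [sq_le_mul_log_one_add_add_mul_log_one_sub hu]

theorem entropy_sum_bound'_general (g lam x : ℝ)
    (hx1 : |x| < Real.sqrt g) (hx2 : |x| < (3 + 2*lam) * Real.sqrt g / 3) :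
    g * binEntropy (1/2 + x/(2*Real.sqrt g)) +
      (3 + 2*lam) * g * binEntropy (1/2 + 3*x/(2*(3 + 2*lam)*Real.sqrt g)) ≤
    (2 + lam) * g * Real.log 4 - x^2 * (6 + lam) / (3 + 2*lam) := by
  have hs : 0 < √g := (abs_nonneg x).trans_lt hx1
  have hg : 0 < g := Real.sqrt_pos.mp hs
  have hL : 0 < 3 + 2 * lam :=
    (pos_iff_pos_of_mul_pos (by linarith [(abs_nonneg x).trans_lt hx2])).mpr hs
  have hu₁ : |x / √g| < 1 := by rwa [abs_div, abs_of_pos hs, div_lt_one hs]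
  have hu₂ : |3 * x / ((3 + 2 * lam) * √g)| < 1 := by
    rw [abs_div, abs_mul, abs_of_pos (by positivity : 0 < (3 + 2 * lam) * √g),
      div_lt_one (by positivity)]
    norm_num
    linarith
  have hlog4 : log 4 = 2 * log 2 := by
    rw [show (4 : ℝ) = 2 ^ 2 by norm_num, Real.log_pow, Nat.cast_ofNat]
  have harg₁ : x / (2 * √g) = x / √g / 2 := by ring
  have harg₂ : 3 * x / (2 * (3 + 2 * lam) * √g) = 3 * x / ((3 + 2 * lam) * √g) / 2 := by
    rw [mul_assoc, div_div, mul_comm 2]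
  calc _ = g * binEntropy (1 / 2 + x / √g / 2) +
          (3 + 2 * lam) * g * binEntropy (1 / 2 + 3 * x / ((3 + 2 * lam) * √g) / 2) := by
        rw [harg₁, harg₂]
    _ ≤ g * (log 2 - (x / √g) ^ 2 / 2) +
          (3 + 2 * lam) * g * (log 2 - (3 * x / ((3 + 2 * lam) * √g)) ^ 2 / 2) := by
        gcongr <;> exact binEntropy_half_add_half_le _ ‹_›
    _ = _ := by
        simp only [hlog4, div_pow, mul_pow, Real.sq_sqrt hg.le]
        field_simp
        ring

theorem entropy_sum_bound' (g lam x : ℝ) (hg : 0 < g) (hlam : 0 ≤ lam)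
    (hx1 : |x| < Real.sqrt g) (hx2 : |x| < (3 + 2*lam) * Real.sqrt g / 3) :
    g * binEntropy (1/2 + x/(2*Real.sqrt g)) +
      (3 + 2*lam) * g * binEntropy (1/2 + 3*x/(2*(3 + 2*lam)*Real.sqrt g)) ≤
    (2 + lam) * g * Real.log 4 - x^2 * (6 + lam) / (3 + 2*lam) :=
  entropy_sum_bound'_general g lam x hx1 hx2
end
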